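/- Let α be a smooth unit-speed curve in E³ defined on an open interval I with nowhere-vanishing curvature (‖α''(s)‖ > 0 for all s ∈ I). Then det(α''(s), α'''(s), α⁽⁴⁾(s)) = 0 for all s ∈ I if and only if α is a curve of constant slope (a general helix), i.e. there exist a unit vector d ∈ E³ and a constant c such that ⟪α'(s), d⟫ = c for all s ∈ I. -/

import Mathlib

open scoped RealInnerProductSpace

/-- Determinant of the 3×3 matrix whose rows are the vectors `u`, `v`, `w` of `E³`. -/
noncomputable def det3 (u v w : EuclideanSpace ℝ (Fin 3)) : ℝ :=
  Matrix.det !![u 0, u 1, u 2; v 0, v 1, v 2; w 0, w 1, w 2]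

noncomputable section Helix

abbrev E3' := EuclideanSpace ℝ (Fin 3)

def crossE (u v : E3') : E3' :=
  (WithLp.equiv 2 (Fin 3 → ℝ)).symm
    ![u 1 * v 2 - u 2 * v 1, u 2 * v 0 - u 0 * v 2, u 0 * v 1 - u 1 * v 0]

@[simp] lemma crossE_c0 (u v : E3') : crossE u v 0 = u 1 * v 2 - u 2 * v 1 := rfl
@[simp] lemma crossE_c1 (u v : E3') : crossE u v 1 = u 2 * v 0 - u 0 * v 2 := rfl
@[simp] lemma crossE_c2 (u v : E3') : crossE u v 2 = u 0 * v 1 - u 1 * v 0 := rfl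

lemma inner3E (u v : E3') : ⟪u, v⟫ = u 0 * v 0 + u 1 * v 1 + u 2 * v 2 := by
  simp [PiLp.inner_apply, RCLike.inner_apply, Fin.sum_univ_three]; ring

lemma crossE_dot (a b c d : E3') :
    ⟪crossE a b, crossE c d⟫ = ⟪a,c⟫*⟪b,d⟫ - ⟪a,d⟫*⟪b,c⟫ := by
  simp only [inner3E, crossE_c0, crossE_c1, crossE_c2]; ring

lemma inner_crossE_self (a b : E3') : ⟪a, crossE a b⟫ = 0 := by
  simp only [inner3E, crossE_c0, crossE_c1, crossE_c2]; ring

lemma hasDerivAt_euc {f : ℝ → E3'} {f' : E3'} {x : ℝ} :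
    HasDerivAt f f' x ↔ ∀ i, HasDerivAt (fun t => f t i) (f' i) x := by
  constructor
  · intro h i
    exact (EuclideanSpace.proj i).hasFDerivAt.comp_hasDerivAt x h
  · intro h
    exact (((EuclideanSpace.equiv (Fin 3) ℝ).symm :
      (Fin 3 → ℝ) →L[ℝ] E3').hasFDerivAt.comp_hasDerivAt x (hasDerivAt_pi.2 h))

lemma hasDerivAt_crossE {f g : ℝ → E3'} {f' g' : E3'} {x : ℝ}
    (hf : HasDerivAt f f' x) (hg : HasDerivAt g g' x) :
    HasDerivAt (fun t => crossE (f t) (g t)) (crossE f' (g x) + crossE (f x) g') x := by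
  have Hf := hasDerivAt_euc.1 hf
  have Hg := hasDerivAt_euc.1 hg
  rw [hasDerivAt_euc]
  intro i
  fin_cases i
  · have := ((Hf 1).mul (Hg 2)).sub ((Hf 2).mul (Hg 1))
    refine this.congr_deriv ?_
    simp [PiLp.add_apply]; ring
  · have := ((Hf 2).mul (Hg 0)).sub ((Hf 0).mul (Hg 2))
    refine this.congr_deriv ?_
    simp [PiLp.add_apply]; ring
  · have := ((Hf 0).mul (Hg 1)).sub ((Hf 1).mul (Hg 0))
    refine this.congr_deriv ?_
    simp [PiLp.add_apply]; ring

lemma const_of_hasDerivAt_zero' {F : Type*} [NormedAddCommGroup F] [NormedSpace ℝ F]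
    {f : ℝ → F} {s : Set ℝ} (hs : Convex ℝ s) (hf : ∀ x ∈ s, HasDerivAt f 0 x)
    {a b : ℝ} (ha : a ∈ s) (hb : b ∈ s) : f a = f b := by
  have := hs.norm_image_sub_le_of_norm_hasDerivWithin_le (C := 0)
    (f' := fun _ => (0 : F)) (fun x hx => (hf x hx).hasDerivWithinAt)
    (fun x hx => le_of_eq norm_zero) hb ha
  have h2 : f a - f b = 0 := by simpa using this
  exact sub_eq_zero.1 h2

lemma contDiffOn_iteratedDeriv' {f : ℝ → E3'} {s : Set ℝ} (hs : IsOpen s) :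
    ∀ (k : ℕ), ContDiffOn ℝ (⊤ : ℕ∞) f s → ContDiffOn ℝ (⊤ : ℕ∞) (iteratedDeriv k f) s := by
  intro k
  induction k generalizing f with
  | zero => intro hf; simpa [iteratedDeriv_zero] using hf
  | succ k ih =>
    intro hf
    rw [iteratedDeriv_succ']
    exact ih (hf.deriv_of_isOpen hs (le_refl _))

lemma unitize_hasDerivAt_zero {F : Type*} [NormedAddCommGroup F] [InnerProductSpace ℝ F]
    {W : ℝ → F} {s b : ℝ} (hpos : (0:ℝ) < ⟪W s, W s⟫) (hbW : HasDerivAt W (b • W s) s) :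
    HasDerivAt (fun t => (Real.sqrt ⟪W t, W t⟫)⁻¹ • W t) 0 s := by
  have hh' : HasDerivAt (fun t => ⟪W t, W t⟫) (2*(b*⟪W s, W s⟫)) s := by
    have hd := HasDerivAt.inner ℝ hbW hbW
    refine hd.congr_deriv ?_
    rw [real_inner_smul_right, real_inner_smul_left]
    ring
  have hrpos : 0 < Real.sqrt ⟪W s, W s⟫ := Real.sqrt_pos.2 hpos
  have hr2 : Real.sqrt ⟪W s, W s⟫ ^ 2 = ⟪W s, W s⟫ := Real.sq_sqrt hpos.le
  have hsq : HasDerivAt (fun t => Real.sqrt ⟪W t, W t⟫) (b * Real.sqrt ⟪W s, W s⟫) s := by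
    have h0 := (Real.hasDerivAt_sqrt (ne_of_gt hpos)).comp s hh'
    refine h0.congr_deriv ?_
    have key : ∀ r : ℝ, 0 < r → r^2 = ⟪W s, W s⟫ →
        1/(2*r) * (2*(b*⟪W s, W s⟫)) = b * r := by
      intro r hr hr2'
      rw [← hr2']
      have : r ≠ 0 := ne_of_gt hr
      field_simp
    exact key _ hrpos hr2
  have hinv := hsq.inv (ne_of_gt hrpos)
  have hFd := hinv.smul hbW
  refine hFd.congr_deriv ?_
  simp only [Pi.inv_apply]
  rw [smul_smul, ← add_smul]
  have hcoef : ∀ r : ℝ, 0 < r → r⁻¹ * b + -(b*r)/r^2 = 0 := by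
    intro r hr
    have : r ≠ 0 := ne_of_gt hr
    field_simp
    ring
  rw [hcoef _ hrpos, zero_smul]

end Helix

/-- For a smooth unit-speed curve in `E³` with nowhere-vanishing curvature,
`det(α'', α''', α⁽⁴⁾) = 0` on `I` iff `α` is a curve of constant slope (general helix),
i.e. `⟪α'(s), d⟫ = c` on `I` for some unit vector `d` and constant `c`. -/
theorem stmt_11 (p q : ℝ) (α : ℝ → EuclideanSpace ℝ (Fin 3))
    (hα : ContDiffOn ℝ (⊤ : ℕ∞) α (Set.Ioo p q))
    (hunit : ∀ s ∈ Set.Ioo p q, ‖deriv α s‖ = 1)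
    (hκ : ∀ s ∈ Set.Ioo p q, ‖iteratedDeriv 2 α s‖ > 0) :
    (∀ s ∈ Set.Ioo p q,
        det3 (iteratedDeriv 2 α s) (iteratedDeriv 3 α s) (iteratedDeriv 4 α s) = 0) ↔
      (∃ d : EuclideanSpace ℝ (Fin 3), ‖d‖ = 1 ∧ ∃ c : ℝ,
        ∀ s ∈ Set.Ioo p q, ⟪deriv α s, d⟫ = c) := by
  set I : Set ℝ := Set.Ioo p q with hIdef
  have hIo : IsOpen I := isOpen_Ioo
  have hIc : Convex ℝ I := convex_Ioo p q
  set A : ℕ → ℝ → EuclideanSpace ℝ (Fin 3) := fun k => iteratedDeriv k α with hAdef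
  -- differentiability of all iterated derivatives
  have hCD : ∀ k : ℕ, ContDiffOn ℝ (⊤ : ℕ∞) (A k) I :=
    fun k => contDiffOn_iteratedDeriv' hIo k (hα.of_le (by simp))
  have hA : ∀ (k : ℕ) {s : ℝ}, s ∈ I → HasDerivAt (A k) (A (k+1) s) s := by
    intro k s hs
    have h1 := (hCD k).differentiableOn (by norm_num)
    have h2 := (h1.differentiableAt (hIo.mem_nhds hs)).hasDerivAt
    simp only [hAdef]
    rw [iteratedDeriv_succ]
    exact h2
  have hA1 : ∀ s, A 1 s = deriv α s := fun s => by show iteratedDeriv 1 α s = deriv α s; rw [iteratedDeriv_one]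
  -- derivative of functions constant on I
  have hconstd : ∀ (g : ℝ → ℝ) (c : ℝ), (∀ t ∈ I, g t = c) →
      ∀ s ∈ I, HasDerivAt g 0 s := by
    intro g c hg s hs
    have hev : g =ᶠ[nhds s] fun _ => c :=
      Filter.eventuallyEq_of_mem (hIo.mem_nhds hs) hg
    exact (hasDerivAt_const s c).congr_of_eventuallyEq hev
  -- first order identities
  have h11 : ∀ s ∈ I, ⟪A 1 s, A 1 s⟫ = 1 := by
    intro s hs
    rw [real_inner_self_eq_norm_sq, hA1, hunit s hs]; norm_num
  have h12 : ∀ s ∈ I, ⟪A 1 s, A 2 s⟫ = 0 := by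
    intro s hs
    have hd : HasDerivAt (fun t => ⟪A 1 t, A 1 t⟫) (⟪A 1 s, A 2 s⟫ + ⟪A 2 s, A 1 s⟫) s :=
      HasDerivAt.inner ℝ (hA 1 hs) (hA 1 hs)
    have hz := (hconstd _ 1 h11 s hs).unique hd
    linarith [real_inner_comm (A 2 s) (A 1 s), hz]
  have h13 : ∀ s ∈ I, ⟪A 1 s, A 3 s⟫ = -⟪A 2 s, A 2 s⟫ := by
    intro s hs
    have hd : HasDerivAt (fun t => ⟪A 1 t, A 2 t⟫) (⟪A 1 s, A 3 s⟫ + ⟪A 2 s, A 2 s⟫) s :=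
      HasDerivAt.inner ℝ (hA 1 hs) (hA 2 hs)
    have hz := (hconstd _ 0 h12 s hs).unique hd
    linarith
  have hselfpos : ∀ x : EuclideanSpace ℝ (Fin 3), x ≠ 0 → (0:ℝ) < ⟪x, x⟫ := by
    intro x hx
    rcases lt_or_eq_of_le (real_inner_self_nonneg (x := x)) with h | h
    · exact h
    · exact absurd (inner_self_eq_zero.1 h.symm) hx
  have hA2ne : ∀ s ∈ I, A 2 s ≠ 0 := by
    intro s hs h0
    have hk := hκ s hs
    have : iteratedDeriv 2 α s = 0 := h0
    rw [this, norm_zero] at hk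
    exact lt_irrefl 0 hk
  have h22pos : ∀ s ∈ I, (0:ℝ) < ⟪A 2 s, A 2 s⟫ :=
    fun s hs => hselfpos _ (hA2ne s hs)
  set W : ℝ → EuclideanSpace ℝ (Fin 3) := fun t => crossE (A 2 t) (A 3 t) with hWdef
  have hWx : ∀ s ∈ I, ⟪W s, crossE (A 1 s) (A 2 s)⟫ = ⟪A 2 s, A 2 s⟫^2 := by
    intro s hs
    have e1 : ⟪A 2 s, A 1 s⟫ = 0 := by rw [real_inner_comm]; exact h12 s hs
    have e2 : ⟪A 3 s, A 1 s⟫ = -⟪A 2 s, A 2 s⟫ := by rw [real_inner_comm]; exact h13 s hs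
    show ⟪crossE (A 2 s) (A 3 s), crossE (A 1 s) (A 2 s)⟫ = _
    rw [crossE_dot, e1, e2]
    ring
  have hWne : ∀ s ∈ I, W s ≠ 0 := by
    intro s hs h0
    have hx := hWx s hs
    rw [h0, inner_zero_left] at hx
    nlinarith [h22pos s hs]
  have hhpos : ∀ s ∈ I, (0:ℝ) < ⟪W s, W s⟫ := fun s hs => hselfpos _ (hWne s hs)
  constructor
  · -- forward: det = 0 implies helix
    intro hdet
    rcases Set.eq_empty_or_nonempty I with hIe | ⟨s₀, hs₀⟩
    · refine ⟨EuclideanSpace.single 0 1, ?_, 0, ?_⟩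
      · simp [EuclideanSpace.norm_single]
      · intro s hs
        rw [hIe] at hs
        exact absurd hs (Set.notMem_empty s)
    · set F : ℝ → EuclideanSpace ℝ (Fin 3) :=
        fun t => (Real.sqrt ⟪W t, W t⟫)⁻¹ • W t with hFdef
      have hF0 : ∀ s ∈ I, HasDerivAt F 0 s := by
        intro s hs
        have hd0 : Matrix.det !![A 2 s 0, A 2 s 1, A 2 s 2; A 3 s 0, A 3 s 1, A 3 s 2;
            A 4 s 0, A 4 s 1, A 4 s 2] = 0 := hdet s hs
        obtain ⟨v, hv, hvM⟩ := Matrix.exists_vecMul_eq_zero_iff.2 hd0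
        have hj : ∀ j : Fin 3, v 0 * A 2 s j + v 1 * A 3 s j + v 2 * A 4 s j = 0 := by
          intro j
          have hcongr := congr_fun hvM j
          fin_cases j <;>
            simpa [Matrix.vecMul, dotProduct, Fin.sum_univ_three] using hcongr
        have hv2 : v 2 ≠ 0 := by
          intro h2
          have e : v 0 * ⟪A 1 s, A 2 s⟫ + v 1 * ⟪A 1 s, A 3 s⟫ = 0 := by
            have e0 := hj 0; have e1 := hj 1; have e2 := hj 2
            rw [h2, zero_mul, add_zero] at e0 e1 e2
            simp only [inner3E]
            linear_combination A 1 s 0 * e0 + A 1 s 1 * e1 + A 1 s 2 * e2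
          rw [h12 s hs, h13 s hs] at e
          have hv1 : v 1 = 0 := by
            have h22 := h22pos s hs
            have hmul : v 1 * ⟪A 2 s, A 2 s⟫ = 0 := by linarith
            rcases mul_eq_zero.1 hmul with h | h
            · exact h
            · exact absurd h (ne_of_gt h22)
          have e' : v 0 * ⟪A 2 s, A 2 s⟫ = 0 := by
            have e0 := hj 0; have e1 := hj 1; have e2 := hj 2
            rw [h2, zero_mul, add_zero, hv1, zero_mul, add_zero] at e0 e1 e2
            simp only [inner3E]
            linear_combination A 2 s 0 * e0 + A 2 s 1 * e1 + A 2 s 2 * e2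
          have hv0 : v 0 = 0 := by
            rcases mul_eq_zero.1 e' with h | h
            · exact h
            · exact absurd h (ne_of_gt (h22pos s hs))
          apply hv
          funext i
          fin_cases i
          · exact hv0
          · exact hv1
          · exact h2
        have hA4 : ∀ j : Fin 3, A 4 s j
            = (-(v 0)/(v 2)) * A 2 s j + (-(v 1)/(v 2)) * A 3 s j := by
          intro j
          have e := hj j
          field_simp
          linear_combination e
        have hbW : HasDerivAt W ((-(v 1)/(v 2)) • W s) s := by
          have hW' := hasDerivAt_crossE (hA 2 hs) (hA 3 hs)
          have heq : crossE (A 3 s) (A 3 s) + crossE (A 2 s) (A 4 s)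
              = (-(v 1)/(v 2)) • W s := by
            have g0 := hA4 0; have g1 := hA4 1; have g2 := hA4 2
            ext i
            fin_cases i
            · show crossE (A 3 s) (A 3 s) 0 + crossE (A 2 s) (A 4 s) 0
                = (-(v 1)/(v 2)) * (crossE (A 2 s) (A 3 s) 0)
              simp only [crossE_c0, crossE_c1, crossE_c2, g0, g1, g2]
              ring
            · show crossE (A 3 s) (A 3 s) 1 + crossE (A 2 s) (A 4 s) 1
                = (-(v 1)/(v 2)) * (crossE (A 2 s) (A 3 s) 1)
              simp only [crossE_c0, crossE_c1, crossE_c2, g0, g1, g2]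
              ring
            · show crossE (A 3 s) (A 3 s) 2 + crossE (A 2 s) (A 4 s) 2
                = (-(v 1)/(v 2)) * (crossE (A 2 s) (A 3 s) 2)
              simp only [crossE_c0, crossE_c1, crossE_c2, g0, g1, g2]
              ring
          rw [← heq]
          exact hW'
        exact unitize_hasDerivAt_zero (hhpos s hs) hbW
      have hFc : ∀ s ∈ I, F s = F s₀ := fun s hs => const_of_hasDerivAt_zero' hIc hF0 hs hs₀
      refine ⟨F s₀, ?_, ⟪deriv α s₀, F s₀⟫, ?_⟩
      · show ‖(Real.sqrt ⟪W s₀, W s₀⟫)⁻¹ • W s₀‖ = 1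
        have hsqn : Real.sqrt ⟪W s₀, W s₀⟫ = ‖W s₀‖ := by
          rw [real_inner_self_eq_norm_sq]
          exact Real.sqrt_sq (norm_nonneg _)
        have hWn : ‖W s₀‖ ≠ 0 := norm_ne_zero_iff.2 (hWne s₀ hs₀)
        rw [norm_smul, hsqn, Real.norm_eq_abs, abs_inv, abs_of_nonneg (norm_nonneg _)]
        field_simp
      · intro s hs
        have key : ∀ t ∈ I, HasDerivAt (fun u => ⟪deriv α u, F s₀⟫) 0 t := by
          intro t ht
          have hdv := HasDerivAt.inner ℝ (hA 1 ht) (hasDerivAt_const t (F s₀))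
          have hz : ⟪A 2 t, F s₀⟫ = 0 := by
            rw [← hFc t ht]
            show ⟪A 2 t, (Real.sqrt ⟪W t, W t⟫)⁻¹ • W t⟫ = 0
            rw [real_inner_smul_right]
            have hx : ⟪A 2 t, W t⟫ = 0 := inner_crossE_self _ _
            rw [hx, mul_zero]
          have h0 : HasDerivAt (fun u => ⟪A 1 u, F s₀⟫) 0 t := by
            refine hdv.congr_deriv ?_
            rw [inner_zero_right, hz]
            ring
          have hfun : (fun u => ⟪deriv α u, F s₀⟫) = fun u => ⟪A 1 u, F s₀⟫ := by
            funext u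
            rw [hA1]
          rw [hfun]
          exact h0
        exact const_of_hasDerivAt_zero' hIc key hs hs₀
  · -- reverse: helix implies det = 0
    rintro ⟨d, hd1, c, hc⟩ s hs
    have hdne : d ≠ 0 := by
      intro h0
      rw [h0, norm_zero] at hd1
      norm_num at hd1
    have o1 : ∀ t ∈ I, ⟪A 2 t, d⟫ = 0 := by
      intro t ht
      have hc' : ∀ u ∈ I, (fun u => ⟪A 1 u, d⟫) u = c := by
        intro u hu
        simp only [hA1]
        exact hc u hu
      have hd0 := hconstd _ c hc' t ht
      have hdv := HasDerivAt.inner ℝ (hA 1 ht) (hasDerivAt_const t d)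
      have hu := hd0.unique hdv
      rw [inner_zero_right] at hu
      linarith
    have o2 : ∀ t ∈ I, ⟪A 3 t, d⟫ = 0 := by
      intro t ht
      have hd0 := hconstd _ 0 o1 t ht
      have hdv := HasDerivAt.inner ℝ (hA 2 ht) (hasDerivAt_const t d)
      have hu := hd0.unique hdv
      rw [inner_zero_right] at hu
      linarith
    have o3 : ∀ t ∈ I, ⟪A 4 t, d⟫ = 0 := by
      intro t ht
      have hd0 := hconstd _ 0 o2 t ht
      have hdv := HasDerivAt.inner ℝ (hA 3 ht) (hasDerivAt_const t d)
      have hu := hd0.unique hdv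
      rw [inner_zero_right] at hu
      linarith
    show Matrix.det !![A 2 s 0, A 2 s 1, A 2 s 2; A 3 s 0, A 3 s 1, A 3 s 2;
        A 4 s 0, A 4 s 1, A 4 s 2] = 0
    apply Matrix.exists_mulVec_eq_zero_iff.1
    refine ⟨fun i => d i, ?_, ?_⟩
    · intro h0
      apply hdne
      ext i
      exact congr_fun h0 i
    · funext j
      fin_cases j
      · have h := o1 s hs
        rw [inner3E] at h
        simp [Matrix.mulVec, dotProduct, Fin.sum_univ_three]
        linarith
      · have h := o2 s hs
        rw [inner3E] at h
        simp [Matrix.mulVec, dotProduct, Fin.sum_univ_three]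
        linarith
      · have h := o3 s hs
        rw [inner3E] at h
        simp [Matrix.mulVec, dotProduct, Fin.sum_univ_three]
        linarith
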